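/- Let X be a complex Banach space and L(X) the Banach algebra of bounded linear operators on X. Let M = [[A, B], [C, D]] ∈ M₂(L(X)) and suppose A and D have strongly Drazin inverses. If A^D B C A^D = 0, A^D B D = 0, A^π B C = 0 and A^π B D = 0, where A^D is the Drazin inverse of A and A^π = I − A·A^D, then M has a Hirano inverse in M₂(L(X)). -/

import Mathlib

/-- `a` has a Hirano inverse: there exists `z` with `az = za`, `z = zaz`,
and `a^2 - az` nilpotent. -/
def HasHiranoInverse {R : Type*} [Ring R] (a : R) : Prop :=
  ∃ z : R, a * z = z * a ∧ z = z * a * z ∧ IsNilpotent (a ^ 2 - a * z)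

/-- `a` has a strongly Drazin inverse: there exists `z` with `az = za`, `z = zaz`,
and `a - az` nilpotent. -/
def HasStronglyDrazinInverse {R : Type*} [Ring R] (a : R) : Prop :=
  ∃ z : R, a * z = z * a ∧ z = z * a * z ∧ IsNilpotent (a - a * z)

/-!
An element `a` has a Hirano inverse as soon as `a - a³` is nilpotent: inside the commutative ring
`ℤ[a]`, the element `a²` is idempotent modulo the nilradical, the idempotent lifts to some `e`,
and `z = a e (1 + a² - e)⁻¹` works.

Write `M = E + F` with `E = [[A, 0], [C, D]]` and `F = [[0, B], [0, 0]]`. The hypotheses give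
`BD = 0` and `BC Aⁿ BC = 0`, hence `F Eⁱ F Eʲ F = 0` for all `i, j`. So the span `I` of the words
`Eⁱ F Eʲ` satisfies `I³ = 0`, and `K = I + I²` is a nilpotent, multiplicatively closed,
`E`-stable submodule. Now `M - M³ ≡ E - E³` modulo `K`, and `E - E³` is nilpotent because `E` is
lower triangular with diagonal entries `A, D` for which `A - A³`, `D - D³` are nilpotent;
a nilpotent element plus an element of such a `K` is nilpotent.
-/

section Ring

variable {R : Type*} [Ring R]

theorem HasHiranoInverse.map {S : Type*} [Ring S] (f : R →+* S) {a : R}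
    (h : HasHiranoInverse a) : HasHiranoInverse (f a) := by
  obtain ⟨z, hcomm, hz, hnil⟩ := h
  refine ⟨f z, by rw [← map_mul, hcomm, map_mul], by rw [← map_mul, ← map_mul, ← hz], ?_⟩
  simpa using hnil.map f

theorem exists_isIdempotentElem_isNilpotent_sub {T : Type*} [CommRing T] {b : T}
    (h : IsNilpotent (b - b ^ 2)) : ∃ e, IsIdempotentElem e ∧ IsNilpotent (b - e) := by
  let f := Ideal.Quotient.mk (nilradical T)
  have hker : ∀ x ∈ RingHom.ker f, IsNilpotent x := fun x hx => by
    rwa [Ideal.mk_ker, mem_nilradical] at hx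
  have hfb : IsIdempotentElem (f b) := by
    rw [IsIdempotentElem, ← map_mul]
    refine Ideal.Quotient.eq.mpr (mem_nilradical.mpr ?_)
    rw [← neg_sub, ← pow_two]
    exact h.neg
  obtain ⟨e, he, hfe⟩ :=
    exists_isIdempotentElem_eq_of_ker_isNilpotent f hker (f b) ⟨b, rfl⟩ hfb
  exact ⟨e, he, hker _ (by rw [RingHom.mem_ker, map_sub, hfe, sub_self])⟩

theorem hasHiranoInverse_of_isNilpotent_sub_pow_three_of_comm {T : Type*} [CommRing T] {a : T}
    (h : IsNilpotent (a - a ^ 3)) : HasHiranoInverse a := by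
  have hsq : IsNilpotent (a ^ 2 - (a ^ 2) ^ 2) := by
    rw [show a ^ 2 - (a ^ 2) ^ 2 = a * (a - a ^ 3) by ring]
    exact (Commute.all _ _).isNilpotent_mul_left h
  obtain ⟨e, he, hnil⟩ := exists_isIdempotentElem_isNilpotent_sub hsq
  obtain ⟨v, hv⟩ := isUnit_iff_exists_inv.mp hnil.isUnit_one_add
  have hae : a * (a * e * v) = e := by linear_combination e * hv + v * he.eq
  refine ⟨a * e * v, mul_comm _ _, ?_, ?_⟩
  · linear_combination (-(a * e * v)) * hae - a * v * he.eq
  · rwa [hae]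

open scoped IsMulCommutative in
theorem hasHiranoInverse_of_isNilpotent_sub_pow_three {a : R} (h : IsNilpotent (a - a ^ 3)) :
    HasHiranoInverse a := by
  let a' : Algebra.adjoin ℤ {a} := ⟨a, Algebra.self_mem_adjoin_singleton ℤ a⟩
  have h' : IsNilpotent (a' - a' ^ 3) :=
    (IsNilpotent.map_iff (f := (Algebra.adjoin ℤ {a}).val) Subtype.val_injective).mp h
  exact (hasHiranoInverse_of_isNilpotent_sub_pow_three_of_comm h').map
    (Algebra.adjoin ℤ {a}).val.toRingHom

theorem HasStronglyDrazinInverse.isNilpotent_sub_pow_three {a : R}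
    (h : HasStronglyDrazinInverse a) : IsNilpotent (a - a ^ 3) := by
  obtain ⟨z, hcomm, hz, hnil⟩ := h
  set e := a * z
  have he : e * e = e := by
    calc a * z * (a * z) = a * (z * a * z) := by noncomm_ring
      _ = e := by rw [← hz]
  have hae : Commute a e := (Commute.refl a).mul_right hcomm
  have hsq : (a - e) * (1 - e - a) = a - a * a := by
    have : (a - e) * (1 - e - a) = a - a * a + (e * a - a * e) + (e * e - e) := by noncomm_ring
    rw [this, he, hae.eq, sub_self, sub_self, add_zero, add_zero]
  have hcube : a - a ^ 3 = (a - e) * ((1 - e - a) * (1 + a)) := by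
    rw [← mul_assoc, hsq]; noncomm_ring
  have hea : Commute (a - e) a := (Commute.refl a).sub_left hae.symm
  have hee : Commute (a - e) e := hae.sub_left (Commute.refl e)
  rw [hcube]
  exact (((Commute.one_right _).sub_right hee).sub_right hea).mul_right
    ((Commute.one_right _).add_right hea) |>.isNilpotent_mul_right hnil

theorem isNilpotent_add_of_mem {S : Type*} [CommRing S] [Algebra S R] {K : Submodule S R} (hKK : K * K ≤ K) (hK : IsNilpotent K)
    {r k : R} (hr : IsNilpotent r) (hrK : ∀ x ∈ K, r * x ∈ K) (hKr : ∀ x ∈ K, x * r ∈ K)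
    (hk : k ∈ K) : IsNilpotent (r + k) := by
  have hpow : ∀ n : ℕ, r ^ n * k ∈ K := by
    intro n
    induction n with
    | zero => simpa using hk
    | succ n ih => simpa [pow_succ', mul_assoc] using hrK _ ih
  have hdiff : ∀ n : ℕ, (r + k) ^ n - r ^ n ∈ K := by
    intro n
    induction n with
    | zero => simp
    | succ n ih =>
      have : (r + k) ^ (n + 1) - r ^ (n + 1) =
          ((r + k) ^ n - r ^ n) * r + ((r + k) ^ n - r ^ n) * k + r ^ n * k := by
        simp only [pow_succ]; noncomm_ring
      rw [this]
      exact add_mem (add_mem (hKr _ ih) (hKK (Submodule.mul_mem_mul ih hk))) (hpow n)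
  obtain ⟨w, hw⟩ := hr
  obtain ⟨m, hm⟩ := hK
  have hmem := Submodule.pow_mem_pow (M := K) (by simpa [hw] using hdiff w) m
  rw [hm, Submodule.zero_eq_bot, Submodule.mem_bot] at hmem
  exact ⟨w * m, by rw [pow_mul, hmem]⟩

end Ring

namespace Submodule

variable {S A : Type*} [CommSemiring S] [Semiring A] [Algebra S A] {I J : Submodule S A}

theorem sup_mul_self_mul_self_le (hI : I * I * I = ⊥) :
    (I ⊔ I * I) * (I ⊔ I * I) ≤ I ⊔ I * I := by
  simp [mul_sup, sup_mul, ← mul_assoc, hI]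

theorem isNilpotent_sup_mul_self (hI : I * I * I = ⊥) : IsNilpotent (I ⊔ I * I) :=
  ⟨3, by simp [pow_succ, bot_mul, mul_sup, sup_mul, ← mul_assoc, hI]⟩

theorem mul_sup_mul_self_le (h : J * I ≤ I) : J * (I ⊔ I * I) ≤ I ⊔ I * I := by
  rw [mul_sup, ← mul_assoc]
  exact sup_le_sup h (mul_le_mul_left h I)

theorem sup_mul_self_mul_le (h : I * J ≤ I) : (I ⊔ I * I) * J ≤ I ⊔ I * I := by
  rw [sup_mul, mul_assoc]
  exact sup_le_sup h (mul_le_mul_right h I)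

end Submodule

section Sandwich

variable {R : Type*} [Ring R] (E F : R)

def sandwichSpan : Submodule ℤ R :=
  Submodule.span ℤ {x | ∃ i j : ℕ, x = E ^ i * F * E ^ j}

theorem pow_mul_mul_pow_mem_sandwichSpan (i j : ℕ) : E ^ i * F * E ^ j ∈ sandwichSpan E F :=
  Submodule.subset_span ⟨i, j, rfl⟩

theorem span_powers_mul_sandwichSpan_le :
    Submodule.span ℤ (Set.range (E ^ ·)) * sandwichSpan E F ≤ sandwichSpan E F := by
  rw [sandwichSpan, Submodule.span_mul_span]
  refine Submodule.span_mono ?_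
  rintro _ ⟨_, ⟨k, rfl⟩, _, ⟨i, j, rfl⟩, rfl⟩
  exact ⟨k + i, j, by simp only [pow_add, mul_assoc]⟩

theorem sandwichSpan_mul_span_powers_le :
    sandwichSpan E F * Submodule.span ℤ (Set.range (E ^ ·)) ≤ sandwichSpan E F := by
  rw [sandwichSpan, Submodule.span_mul_span]
  refine Submodule.span_mono ?_
  rintro _ ⟨_, ⟨i, j, rfl⟩, _, ⟨k, rfl⟩, rfl⟩
  exact ⟨i, j + k, by simp only [pow_add, mul_assoc]⟩

variable {E F}

theorem sandwichSpan_mul_mul_eq_bot (hEF : ∀ i j : ℕ, F * E ^ i * F * E ^ j * F = 0) :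
    sandwichSpan E F * sandwichSpan E F * sandwichSpan E F = ⊥ := by
  rw [sandwichSpan, Submodule.span_mul_span, Submodule.span_mul_span, Submodule.span_eq_bot]
  rintro _ ⟨_, ⟨_, ⟨i, j, rfl⟩, _, ⟨k, l, rfl⟩, rfl⟩, _, ⟨m, n, rfl⟩, rfl⟩
  calc _ = E ^ i * (F * E ^ (j + k) * F * E ^ (l + m) * F) * E ^ n := by
        simp only [pow_add]; noncomm_ring
    _ = 0 := by rw [hEF, mul_zero, zero_mul]

theorem isNilpotent_add_sub_pow_three (hE : IsNilpotent (E - E ^ 3))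
    (hEF : ∀ i j : ℕ, F * E ^ i * F * E ^ j * F = 0) :
    IsNilpotent ((E + F) - (E + F) ^ 3) := by
  set I := sandwichSpan E F
  set P : Submodule ℤ R := Submodule.span ℤ (Set.range (E ^ ·))
  have hI := sandwichSpan_mul_mul_eq_bot hEF
  have hr : E - E ^ 3 ∈ P :=
    sub_mem (Submodule.subset_span ⟨1, pow_one E⟩) (Submodule.subset_span ⟨3, rfl⟩)
  have hF3 : F * F * F = 0 := by simpa using hEF 0 0
  have hsplit : (E + F) - (E + F) ^ 3 = (E - E ^ 3) +
      ((F - E ^ 2 * F - E * F * E - F * E ^ 2) - (E * F * F + F * E * F + F * F * E)) := by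
    -- the two sides differ by `F ^ 3`
    rw [← sub_eq_zero, ← neg_eq_zero, ← hF3]
    noncomm_ring
  have hgen := pow_mul_mul_pow_mem_sandwichSpan E F
  have hI1 : F - E ^ 2 * F - E * F * E - F * E ^ 2 ∈ I := by
    refine sub_mem (sub_mem (sub_mem ?_ ?_) ?_) ?_
    · simpa using hgen 0 0
    · simpa using hgen 2 0
    · simpa using hgen 1 1
    · simpa using hgen 0 2
  have hI2 : E * F * F + F * E * F + F * F * E ∈ I * I := by
    refine add_mem (add_mem ?_ ?_) ?_
    · simpa using Submodule.mul_mem_mul (hgen 1 0) (hgen 0 0)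
    · simpa using Submodule.mul_mem_mul (hgen 0 1) (hgen 0 0)
    · simpa [mul_assoc] using Submodule.mul_mem_mul (hgen 0 0) (hgen 0 1)
  rw [hsplit]
  exact isNilpotent_add_of_mem (K := I ⊔ I * I) (Submodule.sup_mul_self_mul_self_le hI)
    (Submodule.isNilpotent_sup_mul_self hI) hE
    (fun x hx => Submodule.mul_sup_mul_self_le (span_powers_mul_sandwichSpan_le E F)
      (Submodule.mul_mem_mul hr hx))
    (fun x hx => Submodule.sup_mul_self_mul_le (sandwichSpan_mul_span_powers_le E F)
      (Submodule.mul_mem_mul hx hr))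
    (sub_mem (Submodule.mem_sup_left hI1) (Submodule.mem_sup_right hI2))

end Sandwich

section LowerTriangular

variable {L : Type*} [Ring L]

theorem lowerTriangular_pow (a c d : L) (n : ℕ) :
    ∃ y, !![a, 0; c, d] ^ n = !![a ^ n, 0; y, d ^ n] := by
  induction n with
  | zero => exact ⟨0, by simp [Matrix.one_fin_two]⟩
  | succ n ih =>
    obtain ⟨y, hy⟩ := ih
    exact ⟨y * a + d ^ n * c, by simp [pow_succ, hy]⟩

theorem isNilpotent_lowerTriangular {a d : L} (c : L) (ha : IsNilpotent a) (hd : IsNilpotent d) :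
    IsNilpotent !![a, 0; c, d] := by
  obtain ⟨p, hp⟩ := ha
  obtain ⟨q, hq⟩ := hd
  obtain ⟨y, hy⟩ := lowerTriangular_pow a c d p
  obtain ⟨y', hy'⟩ := lowerTriangular_pow a c d q
  -- the `q`-th power has zero second column and the `p`-th power has zero first row
  refine ⟨q + p, ?_⟩
  rw [pow_add, hy', hy, hp, hq, Matrix.mul_fin_two]
  simp [← Matrix.ext_iff, Fin.forall_fin_two]

theorem isNilpotent_lowerTriangular_sub_pow_three {a d : L} (c : L)
    (ha : IsNilpotent (a - a ^ 3)) (hd : IsNilpotent (d - d ^ 3)) :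
    IsNilpotent (!![a, 0; c, d] - !![a, 0; c, d] ^ 3) := by
  obtain ⟨y, hy⟩ := lowerTriangular_pow a c d 3
  rw [hy, show !![a, 0; c, d] - !![a ^ 3, 0; y, d ^ 3] = !![a - a ^ 3, 0; c - y, d - d ^ 3] by
    ext i j; fin_cases i <;> fin_cases j <;> simp]
  exact isNilpotent_lowerTriangular _ ha hd

theorem mul_lowerTriangular_pow_succ {A B C D : L} (hBD : B * D = 0) (n : ℕ) :
    !![0, B; 0, 0] * !![A, 0; C, D] ^ (n + 1) = !![B * C * A ^ n, 0; 0, 0] := by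
  induction n with
  | zero => rw [zero_add, pow_one, Matrix.mul_fin_two]; simp [hBD]
  | succ n ih =>
    rw [pow_succ, ← mul_assoc, ih, Matrix.mul_fin_two]
    simp [pow_succ, mul_assoc]

theorem corner_mul_pow_mul_corner_mul_pow_mul_corner_eq_zero {A B C D : L} (hBD : B * D = 0)
    (hBC : ∀ n : ℕ, B * C * A ^ n * (B * C) = 0) (i j : ℕ) :
    !![0, B; 0, 0] * !![A, 0; C, D] ^ i * !![0, B; 0, 0] * !![A, 0; C, D] ^ j *
      !![0, B; 0, 0] = 0 := by
  set F : Matrix (Fin 2) (Fin 2) L := !![0, B; 0, 0]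
  have hFF : F * F = 0 := by simp [F, ← Matrix.ext_iff, Fin.forall_fin_two]
  rcases i with - | m
  · simp [hFF]
  rcases j with - | n
  · simp [mul_assoc, hFF]
  rw [mul_lowerTriangular_pow_succ hBD, mul_assoc _ F, mul_lowerTriangular_pow_succ hBD]
  have : B * C * A ^ m * (B * C * A ^ n) = 0 := by rw [← mul_assoc, hBC, zero_mul]
  simp [F, this, ← Matrix.ext_iff, Fin.forall_fin_two]

end LowerTriangular

theorem mul_pow_mul_eq_zero_of_drazin {R : Type*} [Ring R] {A B C AD : R} (hcomm : Commute A AD)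
    (h1 : AD * B * C * AD = 0) (h3 : (1 - A * AD) * B * C = 0) (n : ℕ) :
    B * C * A ^ n * (B * C) = 0 := by
  have hBC : B * C = A * AD * (B * C) := by
    rw [← sub_eq_zero, ← h3]; noncomm_ring
  have hBCAD : B * C * AD = 0 := by
    calc B * C * AD = A * (AD * B * C * AD) := by rw [hBC]; noncomm_ring
      _ = 0 := by rw [h1, mul_zero]
  calc B * C * A ^ n * (B * C) = B * C * A ^ n * (A * AD * (B * C)) := by rw [← hBC]
    _ = B * C * (A ^ (n + 1) * AD) * (B * C) := by rw [pow_succ]; noncomm_ring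
    _ = B * C * AD * A ^ (n + 1) * (B * C) := by rw [(hcomm.pow_left (n + 1)).eq]; noncomm_ring
    _ = 0 := by rw [hBCAD, zero_mul, zero_mul]

variable {X : Type*} [NormedAddCommGroup X] [NormedSpace ℂ X] [CompleteSpace X]

theorem hirano_perturb_thm210 (A B C D AD : X →L[ℂ] X)
    (hAD : A * AD = AD * A ∧ AD = AD * A * AD ∧ IsNilpotent (A - A * AD))
    (hD : HasStronglyDrazinInverse D)
    (h1 : AD * B * C * AD = 0)
    (h2 : AD * B * D = 0)
    (h3 : (1 - A * AD) * B * C = 0)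
    (h4 : (1 - A * AD) * B * D = 0) :
    HasHiranoInverse (!![A, B; C, D] : Matrix (Fin 2) (Fin 2) (X →L[ℂ] X)) := by
  have hBD : B * D = 0 :=
    calc B * D = (1 - A * AD) * B * D + A * (AD * B * D) := by noncomm_ring
      _ = 0 := by rw [h2, h4, mul_zero, add_zero]
  have hE : IsNilpotent (!![A, 0; C, D] - !![A, 0; C, D] ^ 3) :=
    isNilpotent_lowerTriangular_sub_pow_three C
      (HasStronglyDrazinInverse.isNilpotent_sub_pow_three ⟨AD, hAD⟩)
      hD.isNilpotent_sub_pow_three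
  have hM : !![A, B; C, D] = !![A, 0; C, D] + !![0, B; 0, 0] := by
    ext i j; fin_cases i <;> fin_cases j <;> simp
  apply hasHiranoInverse_of_isNilpotent_sub_pow_three
  rw [hM]
  exact isNilpotent_add_sub_pow_three hE
    (corner_mul_pow_mul_corner_mul_pow_mul_corner_eq_zero hBD
      (mul_pow_mul_eq_zero_of_drazin hAD.1 h1 h3))
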